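/- For s > 0 let F(s) = lim_{R→∞} ∫_e^R sin(st)/log(t) dt (this improper integral exists for every s > 0). Then lim_{s→0⁺} s·log(1/s)·F(s) = 1; in particular F(s) is asymptotic to 1/(s·log(1/s)) as s → 0⁺. -/

import Mathlib

open Real MeasureTheory Filter Set

namespace AsympF

lemma one_sub_cos_le_sq_div_two (x : ℝ) : 1 - Real.cos x ≤ x ^ 2 / 2 := by
  have := Real.one_sub_sq_div_two_le_cos (x := x)
  linarith

lemma one_sub_cos_le_abs (x : ℝ) : 1 - Real.cos x ≤ |x| := by
  have h1 : Real.sin (x/2) ^ 2 = 1/2 - Real.cos (2 * (x/2)) / 2 := Real.sin_sq_eq_half_sub _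
  have h2 : |Real.sin (x/2)| ≤ 1 := abs_le.mpr ⟨Real.neg_one_le_sin _, Real.sin_le_one _⟩
  have h3 : |Real.sin (x/2)| ≤ |x/2| := Real.abs_sin_le_abs
  have h4 : Real.sin (x/2)^2 ≤ |Real.sin (x/2)| * |x/2| := by
    rw [sq, ← abs_mul_self (Real.sin (x/2)), abs_mul]
    exact mul_le_mul_of_nonneg_left h3 (abs_nonneg _)
  have h5 : |Real.sin (x/2)| * |x/2| ≤ 1 * |x/2| := by
    exact mul_le_mul_of_nonneg_right h2 (abs_nonneg _)
  have h6 : 2 * (x/2) = x := by ring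
  have h7 : |x/2| = |x|/2 := by rw [abs_div]; norm_num
  rw [h6] at h1
  nlinarith [h1, h4.trans h5]

/-- derivative of `-(log t)⁻¹` -/
lemma hasDerivAt_neg_inv_log {x : ℝ} (hx : 1 < x) :
    HasDerivAt (fun t : ℝ => -(Real.log t)⁻¹) ((x * Real.log x ^ 2)⁻¹) x := by
  have hx0 : x ≠ 0 := by positivity
  have hlog : Real.log x ≠ 0 := ne_of_gt (Real.log_pos hx)
  have h := ((Real.hasDerivAt_log hx0).fun_inv hlog).fun_neg
  refine h.congr_deriv ?_
  field_simp

lemma c1_integrableOn {a : ℝ} (ha : 1 < a) :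
    IntegrableOn (fun t : ℝ => (t * Real.log t ^ 2)⁻¹) (Ioi a) := by
  apply integrableOn_Ioi_deriv_of_nonneg' (g := fun t => -(Real.log t)⁻¹)
  · intro x hx
    exact hasDerivAt_neg_inv_log (lt_of_lt_of_le ha hx)
  · intro x hx
    have hx1 : 1 < x := lt_trans ha hx
    have : (0:ℝ) < x * Real.log x ^ 2 := by
      have := Real.log_pos hx1
      positivity
    positivity
  · have : Tendsto (fun t : ℝ => (Real.log t)⁻¹) atTop (nhds 0) :=
      Real.tendsto_log_atTop.inv_tendsto_atTop
    simpa using this.neg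

lemma c1_integral {a : ℝ} (ha : 1 < a) :
    ∫ t in Ioi a, (t * Real.log t ^ 2)⁻¹ = (Real.log a)⁻¹ := by
  have h := integral_Ioi_of_hasDerivAt_of_nonneg' (g := fun t => -(Real.log t)⁻¹)
    (g' := fun t => (t * Real.log t ^ 2)⁻¹) (a := a) (l := 0)
    (fun x hx => hasDerivAt_neg_inv_log (lt_of_lt_of_le ha hx))
    (fun x hx => by
      have hx1 : 1 < x := lt_trans ha hx
      have := Real.log_pos hx1
      positivity)
    (by
      have : Tendsto (fun t : ℝ => (Real.log t)⁻¹) atTop (nhds 0) :=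
        Real.tendsto_log_atTop.inv_tendsto_atTop
      simpa using this.neg)
  rw [h]; ring

end AsympF
namespace AsympF
open intervalIntegral

lemma c1_nonneg {t : ℝ} (ht : 1 < t) : 0 ≤ (t * Real.log t ^ 2)⁻¹ := by
  have := Real.log_pos ht
  positivity

lemma contOn_c1 : ContinuousOn (fun t : ℝ => (t * Real.log t ^ 2)⁻¹) (Ioi 1) := by
  intro x hx
  have hx1 : (1:ℝ) < x := hx
  have hx0 : x ≠ 0 := by positivity
  have hlog : Real.log x ≠ 0 := ne_of_gt (Real.log_pos hx1)
  have h : ContinuousAt (fun t : ℝ => (t * Real.log t ^ 2)⁻¹) x := by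
    apply ContinuousAt.inv₀
    · exact continuousAt_id.mul ((Real.continuousAt_log hx0).pow 2)
    · have := Real.log_pos hx1
      positivity
  exact h.continuousWithinAt

lemma contOn_cos_c1 (s : ℝ) :
    ContinuousOn (fun t : ℝ => Real.cos (s * t) * (t * Real.log t ^ 2)⁻¹) (Ioi 1) :=
  (Real.continuous_cos.comp (continuous_const.mul continuous_id)).continuousOn.mul contOn_c1

lemma cos_c1_integrableOn {s a : ℝ} (ha : 1 < a) :
    IntegrableOn (fun t : ℝ => Real.cos (s * t) * (t * Real.log t ^ 2)⁻¹) (Ioi a) := by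
  apply Integrable.mono' (c1_integrableOn ha)
  · exact ((contOn_cos_c1 s).mono (Ioi_subset_Ioi ha.le)).aestronglyMeasurable measurableSet_Ioi
  · rw [ae_restrict_iff' measurableSet_Ioi]
    filter_upwards with t ht
    have ht1 : 1 < t := lt_trans ha ht
    rw [norm_mul]
    calc ‖Real.cos (s*t)‖ * ‖(t * Real.log t ^ 2)⁻¹‖
        ≤ 1 * ‖(t * Real.log t ^ 2)⁻¹‖ := by
          apply mul_le_mul_of_nonneg_right _ (norm_nonneg _)
          exact Real.abs_cos_le_one _
      _ = (t * Real.log t ^ 2)⁻¹ := by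
          rw [one_mul, Real.norm_eq_abs, abs_of_nonneg (c1_nonneg ht1)]

lemma one_sub_cos_c1_integrableOn {s a : ℝ} (ha : 1 < a) :
    IntegrableOn (fun t : ℝ => (1 - Real.cos (s * t)) * (t * Real.log t ^ 2)⁻¹) (Ioi a) := by
  have h := (c1_integrableOn ha).sub (cos_c1_integrableOn (s := s) ha)
  apply h.congr
  filter_upwards with t
  simp only [Pi.sub_apply]
  ring

lemma phi_hasDerivAt {s x : ℝ} (hs : 0 < s) (hx : 1 < x) :
    HasDerivAt (fun t : ℝ => -Real.cos (s * t) * (s * Real.log t)⁻¹)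
      (Real.sin (s * x) / Real.log x + s⁻¹ * (Real.cos (s * x) * (x * Real.log x ^ 2)⁻¹)) x := by
  have hx0 : x ≠ 0 := by positivity
  have hlogpos : 0 < Real.log x := Real.log_pos hx
  have hlog : Real.log x ≠ 0 := ne_of_gt hlogpos
  have hsl : s * Real.log x ≠ 0 := by positivity
  have h1 : HasDerivAt (fun t : ℝ => -Real.cos (s * t)) (Real.sin (s * x) * s) x := by
    have := ((hasDerivAt_id x).const_mul s).cos
    simpa using this.fun_neg
  have h2 : HasDerivAt (fun t : ℝ => (s * Real.log t)⁻¹)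
      (-(s * x⁻¹) / (s * Real.log x) ^ 2) x := by
    exact ((Real.hasDerivAt_log hx0).const_mul s).inv hsl
  have h := h1.mul h2
  refine h.congr_deriv ?_
  field_simp

lemma key_identity {s R : ℝ} (hs : 0 < s) (hR : Real.exp 1 ≤ R) :
    ∫ t in (Real.exp 1)..R, Real.sin (s * t) / Real.log t
      = -Real.cos (s * R) * (s * Real.log R)⁻¹ + Real.cos (s * Real.exp 1) * s⁻¹
        - s⁻¹ * ∫ t in (Real.exp 1)..R, Real.cos (s * t) * (t * Real.log t ^ 2)⁻¹ := by
  set E := Real.exp 1 with hE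
  have hE1 : (1:ℝ) < E := by
    rw [hE]; have := Real.add_one_le_exp (1:ℝ); linarith
  have hsub : uIcc E R ⊆ Ioi 1 := by
    rw [uIcc_of_le hR]
    intro t ht
    exact lt_of_lt_of_le hE1 ht.1
  have hcont_sin : ContinuousOn (fun t : ℝ => Real.sin (s * t) / Real.log t) (Ioi 1) := by
    intro x hx
    have hx0 : x ≠ (0:ℝ) := by have : (1:ℝ) < x := hx; positivity
    have hlog : Real.log x ≠ 0 := ne_of_gt (Real.log_pos hx)
    exact (((Real.continuous_sin.comp (continuous_const.mul continuous_id)).continuousAt).div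
      (Real.continuousAt_log hx0) hlog).continuousWithinAt
  have hint1 : IntervalIntegrable (fun t : ℝ => Real.sin (s * t) / Real.log t) volume E R :=
    (hcont_sin.mono hsub).intervalIntegrable
  have hint2 : IntervalIntegrable
      (fun t : ℝ => Real.cos (s * t) * (t * Real.log t ^ 2)⁻¹) volume E R :=
    ((contOn_cos_c1 s).mono hsub).intervalIntegrable
  have hderiv : ∀ x ∈ uIcc E R,
      HasDerivAt (fun t : ℝ => -Real.cos (s * t) * (s * Real.log t)⁻¹)
        (Real.sin (s * x) / Real.log x + s⁻¹ * (Real.cos (s * x) * (x * Real.log x ^ 2)⁻¹)) x :=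
    fun x hx => phi_hasDerivAt hs (hsub hx)
  have hintD : IntervalIntegrable (fun x : ℝ =>
      Real.sin (s * x) / Real.log x + s⁻¹ * (Real.cos (s * x) * (x * Real.log x ^ 2)⁻¹))
      volume E R := hint1.add (hint2.const_mul _)
  have h := intervalIntegral.integral_eq_sub_of_hasDerivAt hderiv hintD
  rw [intervalIntegral.integral_add hint1 (hint2.const_mul _),
    intervalIntegral.integral_const_mul] at h
  have hlogE : Real.log E = 1 := Real.log_exp 1
  rw [hlogE] at h
  have : -Real.cos (s * E) * (s * 1)⁻¹ = -(Real.cos (s * E) * s⁻¹) := by ring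
  rw [this] at h
  linarith [h]

lemma part1 {s : ℝ} (hs : 0 < s) :
    Tendsto (fun R : ℝ => ∫ t in (Real.exp 1)..R, Real.sin (s * t) / Real.log t)
      atTop (nhds (s⁻¹ * (Real.cos (s * Real.exp 1)
        - ∫ t in Ioi (Real.exp 1), Real.cos (s * t) * (t * Real.log t ^ 2)⁻¹))) := by
  set E := Real.exp 1 with hE
  have hE1 : (1:ℝ) < E := by
    rw [hE]; have := Real.add_one_le_exp (1:ℝ); linarith
  have t1 : Tendsto (fun R : ℝ => -Real.cos (s * R) * (s * Real.log R)⁻¹) atTop (nhds 0) := by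
    apply squeeze_zero_norm (a := fun R : ℝ => |(s * Real.log R)⁻¹|)
    · intro R
      rw [norm_mul, norm_neg, Real.norm_eq_abs, Real.norm_eq_abs]
      calc |Real.cos (s * R)| * |(s * Real.log R)⁻¹|
          ≤ 1 * |(s * Real.log R)⁻¹| :=
            mul_le_mul_of_nonneg_right (Real.abs_cos_le_one _) (abs_nonneg _)
        _ = |(s * Real.log R)⁻¹| := one_mul _
    · have h : Tendsto (fun R : ℝ => (s * Real.log R)⁻¹) atTop (nhds 0) :=
        (Real.tendsto_log_atTop.const_mul_atTop hs).inv_tendsto_atTop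
      simpa using h.abs
  have t2 : Tendsto (fun R : ℝ => ∫ t in E..R, Real.cos (s * t) * (t * Real.log t ^ 2)⁻¹)
      atTop (nhds (∫ t in Ioi E, Real.cos (s * t) * (t * Real.log t ^ 2)⁻¹)) :=
    intervalIntegral_tendsto_integral_Ioi E (cos_c1_integrableOn hE1) tendsto_id
  have t3 := (t1.add_const (Real.cos (s * E) * s⁻¹)).sub (t2.const_mul s⁻¹)
  rw [zero_add] at t3
  have heq : s⁻¹ * (Real.cos (s * E)
      - ∫ t in Ioi E, Real.cos (s * t) * (t * Real.log t ^ 2)⁻¹)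
      = Real.cos (s * E) * s⁻¹
        - s⁻¹ * ∫ t in Ioi E, Real.cos (s * t) * (t * Real.log t ^ 2)⁻¹ := by ring
  rw [heq]
  apply t3.congr'
  filter_upwards [eventually_ge_atTop E] with R hR
  exact (key_identity hs hR).symm

end AsympF
namespace AsympF

lemma inv_sq_integrableOn {b : ℝ} (hb : 0 < b) :
    IntegrableOn (fun x : ℝ => (x ^ 2)⁻¹) (Ioi b) := by
  apply integrableOn_Ioi_deriv_of_nonneg' (g := fun x : ℝ => -x⁻¹) (l := 0)
  · intro x hx
    have hx0 : x ≠ 0 := by have := lt_of_lt_of_le hb hx; positivity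
    simpa using (hasDerivAt_inv hx0).fun_neg
  · intro x hx
    positivity
  · simpa using (tendsto_inv_atTop_zero : Tendsto (fun x:ℝ => x⁻¹) atTop (nhds 0)).neg

lemma inv_sq_integral {b : ℝ} (hb : 0 < b) :
    ∫ x in Ioi b, (x ^ 2)⁻¹ = b⁻¹ := by
  have h := integral_Ioi_of_hasDerivAt_of_nonneg' (g := fun x : ℝ => -x⁻¹)
    (g' := fun x : ℝ => (x ^ 2)⁻¹) (a := b) (l := 0)
    (fun x hx => by
      have hx0 : x ≠ 0 := by have := lt_of_lt_of_le hb hx; positivity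
      simpa using (hasDerivAt_inv hx0).fun_neg)
    (fun x hx => by positivity)
    (by simpa using (tendsto_inv_atTop_zero : Tendsto (fun x:ℝ => x⁻¹) atTop (nhds 0)).neg)
  rw [h]; ring

/-- derivative of `ψ t = sin (s t) / (s (t log² t))` -/
lemma psi_hasDerivAt {s x : ℝ} (hs : 0 < s) (hx : 1 < x) :
    HasDerivAt (fun t : ℝ => Real.sin (s * t) * (s * (t * Real.log t ^ 2))⁻¹)
      (Real.cos (s * x) * (x * Real.log x ^ 2)⁻¹
        - Real.sin (s * x) * ((Real.log x ^ 2 + 2 * Real.log x) / (s * (x * Real.log x ^ 2) ^ 2)))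
      x := by
  have hx0 : x ≠ 0 := by positivity
  have hlogpos : 0 < Real.log x := Real.log_pos hx
  have hne : s * (x * Real.log x ^ 2) ≠ 0 := by positivity
  have h1 : HasDerivAt (fun t : ℝ => Real.sin (s * t)) (Real.cos (s * x) * s) x := by
    simpa using ((hasDerivAt_id x).const_mul s).sin
  have h2 : HasDerivAt (fun t : ℝ => t * Real.log t ^ 2)
      (1 * Real.log x ^ 2 + x * (2 * Real.log x ^ 1 * x⁻¹)) x :=
    (hasDerivAt_id x).mul ((Real.hasDerivAt_log hx0).pow 2)
  have h3 : HasDerivAt (fun t : ℝ => (s * (t * Real.log t ^ 2))⁻¹)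
      (-(s * (1 * Real.log x ^ 2 + x * (2 * Real.log x ^ 1 * x⁻¹)))
        / (s * (x * Real.log x ^ 2)) ^ 2) x :=
    (h2.const_mul s).inv hne
  have h := h1.mul h3
  refine h.congr_deriv ?_
  field_simp
  ring

lemma H_bound {s b : ℝ} (hs : 0 < s) (hb : Real.exp 1 ≤ b) (hsb : s * b = 1) :
    |∫ t in Ioi b, Real.cos (s * t) * (t * Real.log t ^ 2)⁻¹| ≤ 4 / Real.log b ^ 2 := by
  have hE1 : (1:ℝ) < Real.exp 1 := by have := Real.add_one_le_exp (1:ℝ); linarith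
  have hb1 : 1 < b := lt_of_lt_of_le hE1 hb
  have hb0 : 0 < b := by linarith
  have hl1 : 1 ≤ Real.log b := by
    have := Real.log_le_log (by positivity) hb
    simpa [Real.log_exp] using this
  have hlpos : 0 < Real.log b := by linarith
  set r : ℝ → ℝ := fun x => Real.sin (s * x) *
    ((Real.log x ^ 2 + 2 * Real.log x) / (s * (x * Real.log x ^ 2) ^ 2)) with hr
  -- pointwise bound on r
  have hrbound : ∀ x ∈ Ioi b, ‖r x‖ ≤ 3 / (s * Real.log b ^ 2) * (x ^ 2)⁻¹ := by
    intro x hx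
    have hxb : b < x := hx
    have hx1 : 1 < x := lt_trans hb1 hxb
    have hx0 : 0 < x := by linarith
    have hL : Real.log b ≤ Real.log x := Real.log_le_log hb0 hxb.le
    have hL1 : 1 ≤ Real.log x := le_trans hl1 hL
    have hLpos : 0 < Real.log x := by linarith
    rw [hr, norm_mul, Real.norm_eq_abs, Real.norm_eq_abs]
    have h1 : |Real.sin (s * x)| ≤ 1 :=
      abs_le.mpr ⟨Real.neg_one_le_sin _, Real.sin_le_one _⟩
    have h2 : |(Real.log x ^ 2 + 2 * Real.log x) / (s * (x * Real.log x ^ 2) ^ 2)|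
        = (Real.log x ^ 2 + 2 * Real.log x) / (s * (x * Real.log x ^ 2) ^ 2) := by
      apply abs_of_nonneg
      positivity
    rw [h2]
    calc |Real.sin (s * x)| * ((Real.log x ^ 2 + 2 * Real.log x) / (s * (x * Real.log x ^ 2) ^ 2))
        ≤ 1 * ((Real.log x ^ 2 + 2 * Real.log x) / (s * (x * Real.log x ^ 2) ^ 2)) := by
          apply mul_le_mul_of_nonneg_right h1
          positivity
      _ = (Real.log x ^ 2 + 2 * Real.log x) / (s * (x * Real.log x ^ 2) ^ 2) := one_mul _
      _ ≤ 3 / (s * Real.log b ^ 2) * (x ^ 2)⁻¹ := by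
          rw [div_le_iff₀ (by positivity)]
          have key : (Real.log x ^ 2 + 2 * Real.log x) * (s * Real.log b ^ 2 * x ^ 2)
              ≤ 3 * (s * (x * Real.log x ^ 2) ^ 2) := by
            have e1 : Real.log x ^ 2 + 2 * Real.log x ≤ 3 * Real.log x ^ 2 := by nlinarith
            have e2 : Real.log b ^ 2 ≤ Real.log x ^ 2 := by nlinarith
            calc (Real.log x ^ 2 + 2 * Real.log x) * (s * Real.log b ^ 2 * x ^ 2)
                ≤ 3 * Real.log x ^ 2 * (s * Real.log b ^ 2 * x ^ 2) :=
                  mul_le_mul_of_nonneg_right e1 (by positivity)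
              _ ≤ 3 * Real.log x ^ 2 * (s * Real.log x ^ 2 * x ^ 2) := by
                  apply mul_le_mul_of_nonneg_left _ (by positivity)
                  apply mul_le_mul_of_nonneg_right _ (by positivity)
                  exact mul_le_mul_of_nonneg_left e2 hs.le
              _ = 3 * (s * (x * Real.log x ^ 2) ^ 2) := by ring
          calc (Real.log x ^ 2 + 2 * Real.log x)
              = (Real.log x ^ 2 + 2 * Real.log x) := rfl
            _ ≤ 3 * (s * (x * Real.log x ^ 2) ^ 2) / (s * Real.log b ^ 2 * x ^ 2) := by
                rw [le_div_iff₀ (by positivity)]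
                exact key
            _ = 3 / (s * Real.log b ^ 2) * (x ^ 2)⁻¹ * (s * (x * Real.log x ^ 2) ^ 2) := by
                field_simp
  -- integrability of r on Ioi b
  have hrcont : ContinuousOn r (Ioi 1) := by
    intro x hx
    have hx1 : (1:ℝ) < x := hx
    have hx0 : x ≠ 0 := by positivity
    have hlog : 0 < Real.log x := Real.log_pos hx1
    have hden : s * (x * Real.log x ^ 2) ^ 2 ≠ 0 := by positivity
    apply ContinuousAt.continuousWithinAt
    apply ContinuousAt.mul
    · exact (Real.continuous_sin.comp (continuous_const.mul continuous_id)).continuousAt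
    · apply ContinuousAt.div
      · exact ((Real.continuousAt_log hx0).pow 2).add
          (((Real.continuousAt_log hx0)).const_mul 2)
      · exact (continuousAt_const.mul ((continuousAt_id.mul
          ((Real.continuousAt_log hx0).pow 2)).pow 2))
      · exact hden
  have hrint : IntegrableOn r (Ioi b) := by
    apply Integrable.mono' (((inv_sq_integrableOn hb0).const_mul (3 / (s * Real.log b ^ 2))))
    · exact (hrcont.mono (Ioi_subset_Ioi hb1.le)).aestronglyMeasurable measurableSet_Ioi
    · rw [ae_restrict_iff' measurableSet_Ioi]
      filter_upwards with x hx
      exact hrbound x hx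
  -- ψ tends to 0 at infinity
  have hpsi_tendsto : Tendsto (fun t : ℝ => Real.sin (s * t) * (s * (t * Real.log t ^ 2))⁻¹)
      atTop (nhds 0) := by
    apply squeeze_zero_norm' (a := fun t : ℝ => |(s * (t * Real.log t ^ 2))⁻¹|)
    · filter_upwards with t
      rw [norm_mul, Real.norm_eq_abs, Real.norm_eq_abs]
      calc |Real.sin (s * t)| * |(s * (t * Real.log t ^ 2))⁻¹|
          ≤ 1 * |(s * (t * Real.log t ^ 2))⁻¹| :=
            mul_le_mul_of_nonneg_right
              (abs_le.mpr ⟨Real.neg_one_le_sin _, Real.sin_le_one _⟩) (abs_nonneg _)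
        _ = |(s * (t * Real.log t ^ 2))⁻¹| := one_mul _
    · have h1 : Tendsto (fun t : ℝ => t * Real.log t ^ 2) atTop atTop :=
        Filter.Tendsto.atTop_mul_atTop₀ tendsto_id
          ((tendsto_pow_atTop (two_ne_zero)).comp Real.tendsto_log_atTop)
      have h2 : Tendsto (fun t : ℝ => s * (t * Real.log t ^ 2)) atTop atTop :=
        h1.const_mul_atTop hs
      simpa using h2.inv_tendsto_atTop.abs
  -- FTC on Ioi b for ψ
  have hψderiv : ∀ x ∈ Ici b,
      HasDerivAt (fun t : ℝ => Real.sin (s * t) * (s * (t * Real.log t ^ 2))⁻¹)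
        (Real.cos (s * x) * (x * Real.log x ^ 2)⁻¹ - r x) x :=
    fun x hx => psi_hasDerivAt hs (lt_of_lt_of_le hb1 hx)
  have hψ'int : IntegrableOn
      (fun x : ℝ => Real.cos (s * x) * (x * Real.log x ^ 2)⁻¹ - r x) (Ioi b) :=
    (cos_c1_integrableOn hb1).sub hrint
  have hFTC := integral_Ioi_of_hasDerivAt_of_tendsto' hψderiv hψ'int hpsi_tendsto
  -- split
  have hsplit : ∫ t in Ioi b, Real.cos (s * t) * (t * Real.log t ^ 2)⁻¹
      = (∫ t in Ioi b, (Real.cos (s * t) * (t * Real.log t ^ 2)⁻¹ - r t))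
        + ∫ t in Ioi b, r t := by
    rw [← integral_add hψ'int hrint]
    congr 1
    funext t
    ring
  have hψb : ‖Real.sin (s * b) * (s * (b * Real.log b ^ 2))⁻¹‖ ≤ (Real.log b ^ 2)⁻¹ := by
    rw [norm_mul, Real.norm_eq_abs, Real.norm_eq_abs]
    have : |(s * (b * Real.log b ^ 2))⁻¹| = (s * (b * Real.log b ^ 2))⁻¹ :=
      abs_of_nonneg (by positivity)
    rw [this]
    calc |Real.sin (s * b)| * (s * (b * Real.log b ^ 2))⁻¹
        ≤ 1 * (s * (b * Real.log b ^ 2))⁻¹ :=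
          mul_le_mul_of_nonneg_right
            (abs_le.mpr ⟨Real.neg_one_le_sin _, Real.sin_le_one _⟩) (by positivity)
      _ = (s * b * Real.log b ^ 2)⁻¹ := by ring_nf
      _ = (Real.log b ^ 2)⁻¹ := by rw [hsb, one_mul]
  have hrint_bound : |∫ t in Ioi b, r t| ≤ 3 / Real.log b ^ 2 := by
    have h := norm_integral_le_of_norm_le
      ((inv_sq_integrableOn hb0).const_mul (3 / (s * Real.log b ^ 2)))
      (by
        rw [ae_restrict_iff' measurableSet_Ioi]
        filter_upwards with x hx
        exact hrbound x hx)
    rw [Real.norm_eq_abs] at h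
    calc |∫ t in Ioi b, r t| ≤ ∫ t in Ioi b, 3 / (s * Real.log b ^ 2) * (t ^ 2)⁻¹ := h
      _ = 3 / (s * Real.log b ^ 2) * ∫ t in Ioi b, (t ^ 2)⁻¹ := by
          rw [integral_const_mul]
      _ = 3 / (s * Real.log b ^ 2) * b⁻¹ := by rw [inv_sq_integral hb0]
      _ = 3 / Real.log b ^ 2 := by
          field_simp
          nlinarith [hsb]
  calc |∫ t in Ioi b, Real.cos (s * t) * (t * Real.log t ^ 2)⁻¹|
      = |(0 - Real.sin (s * b) * (s * (b * Real.log b ^ 2))⁻¹) + ∫ t in Ioi b, r t| := by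
        rw [hsplit, hFTC]
    _ ≤ |0 - Real.sin (s * b) * (s * (b * Real.log b ^ 2))⁻¹| + |∫ t in Ioi b, r t| :=
        abs_add_le _ _
    _ ≤ (Real.log b ^ 2)⁻¹ + 3 / Real.log b ^ 2 := by
        apply add_le_add _ hrint_bound
        rw [zero_sub, abs_neg]
        rw [Real.norm_eq_abs] at hψb
        exact hψb
    _ = 4 / Real.log b ^ 2 := by
        rw [inv_eq_one_div]
        ring

end AsympF
namespace AsympF

set_option maxHeartbeats 1000000 in
lemma A_bound {s : ℝ} (hs : 0 < s) (hs2 : s < Real.exp (-2 : ℝ)) :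
    |∫ t in Ioc (Real.exp 1) s⁻¹, (1 - Real.cos (s * t)) * (t * Real.log t ^ 2)⁻¹|
      ≤ s / 2 + 4 / Real.log s⁻¹ ^ 2 := by
  have hE1 : (1:ℝ) < Real.exp 1 := by have := Real.add_one_le_exp (1:ℝ); linarith
  set E := Real.exp 1 with hEdef
  set b := s⁻¹ with hbdef
  have hb_large : Real.exp 2 < b := by
    rw [hbdef]
    rw [show Real.exp 2 = (Real.exp (-2 : ℝ))⁻¹ by rw [← Real.exp_neg]; norm_num]
    exact inv_strictAnti₀ hs hs2
  have hb0 : 0 < b := by rw [hbdef]; positivity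
  have hb1 : 1 < b := lt_trans (by nlinarith [Real.add_one_le_exp (2:ℝ)]) hb_large
  have hℓ : 2 < Real.log b := by
    have := Real.log_lt_log (Real.exp_pos 2) hb_large
    simpa [Real.log_exp] using this
  set ℓ := Real.log b with hℓdef
  set m := Real.sqrt b with hmdef
  have hm_sq : m ^ 2 = b := Real.sq_sqrt hb0.le
  have hm0 : 0 < m := Real.sqrt_pos.mpr hb0
  have hEm : E < m := by
    have h1 : Real.sqrt (Real.exp 2) < m := by
      rw [hmdef]
      exact Real.sqrt_lt_sqrt (Real.exp_pos 2).le hb_large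
    have h2 : Real.sqrt (Real.exp 2) = E := by
      rw [hEdef, show (2:ℝ) = 1 + 1 by norm_num, Real.exp_add]
      exact Real.sqrt_mul_self (Real.exp_pos 1).le
    linarith
  have hm1 : 1 ≤ m := by
    rw [hmdef, show (1:ℝ) = Real.sqrt 1 from (Real.sqrt_one).symm]
    exact Real.sqrt_le_sqrt hb1.le
  have hmb : m ≤ b := by nlinarith [hm_sq]
  have hlogm : Real.log m = ℓ / 2 := by
    rw [hmdef, Real.log_sqrt hb0.le]
  have hint : IntegrableOn (fun t : ℝ => (1 - Real.cos (s * t)) * (t * Real.log t ^ 2)⁻¹)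
      (Ioc E b) := (one_sub_cos_c1_integrableOn hE1).mono Ioc_subset_Ioi_self le_rfl
  have hnonneg : ∀ t ∈ Ioc E b, 0 ≤ (1 - Real.cos (s * t)) * (t * Real.log t ^ 2)⁻¹ := by
    intro t ht
    have ht1 : 1 < t := lt_trans hE1 ht.1
    exact mul_nonneg (by nlinarith [Real.cos_le_one (s * t)]) (c1_nonneg ht1)
  -- split the interval
  have hunion : Ioc E b = Ioc E m ∪ Ioc m b := (Ioc_union_Ioc_eq_Ioc hEm.le hmb).symm
  have hdisj : Disjoint (Ioc E m) (Ioc m b) := Ioc_disjoint_Ioc_of_le le_rfl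
  have hint1 : IntegrableOn (fun t : ℝ => (1 - Real.cos (s * t)) * (t * Real.log t ^ 2)⁻¹)
      (Ioc E m) := hint.mono (by rw [hunion]; exact subset_union_left) le_rfl
  have hint2 : IntegrableOn (fun t : ℝ => (1 - Real.cos (s * t)) * (t * Real.log t ^ 2)⁻¹)
      (Ioc m b) := hint.mono (by rw [hunion]; exact subset_union_right) le_rfl
  have hsplit : ∫ t in Ioc E b, (1 - Real.cos (s * t)) * (t * Real.log t ^ 2)⁻¹
      = (∫ t in Ioc E m, (1 - Real.cos (s * t)) * (t * Real.log t ^ 2)⁻¹)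
        + ∫ t in Ioc m b, (1 - Real.cos (s * t)) * (t * Real.log t ^ 2)⁻¹ := by
    rw [hunion]
    exact setIntegral_union hdisj measurableSet_Ioc hint1 hint2
  -- bound on Ioc E m
  have hbd1 : ∀ t ∈ Ioc E m, (1 - Real.cos (s * t)) * (t * Real.log t ^ 2)⁻¹ ≤ s ^ 2 * m / 2 := by
    intro t ht
    have ht1 : 1 < t := lt_trans hE1 ht.1
    have ht0 : 0 < t := by linarith
    have hlogt : 1 ≤ Real.log t := by
      have := Real.log_le_log (Real.exp_pos 1) ht.1.le
      simpa [Real.log_exp] using this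
    have h1 : 1 - Real.cos (s * t) ≤ (s * t) ^ 2 / 2 := one_sub_cos_le_sq_div_two _
    have h2 : (t * Real.log t ^ 2)⁻¹ ≤ t⁻¹ := by
      apply inv_anti₀ ht0
      have hsq : 1 ≤ Real.log t ^ 2 := by nlinarith
      nlinarith
    calc (1 - Real.cos (s * t)) * (t * Real.log t ^ 2)⁻¹
        ≤ ((s * t) ^ 2 / 2) * t⁻¹ := by
          apply mul_le_mul h1 h2 (by positivity)
          positivity
      _ = s ^ 2 * t / 2 := by field_simp
      _ ≤ s ^ 2 * m / 2 := by nlinarith [ht.2]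
  -- bound on Ioc m b
  have hbd2 : ∀ t ∈ Ioc m b, (1 - Real.cos (s * t)) * (t * Real.log t ^ 2)⁻¹
      ≤ s * (4 / ℓ ^ 2) := by
    intro t ht
    have htm : m < t := ht.1
    have ht0 : 0 < t := lt_trans hm0 htm
    have hlogt : ℓ / 2 ≤ Real.log t := by
      rw [← hlogm]
      exact Real.log_le_log hm0 htm.le
    have h1 : 1 - Real.cos (s * t) ≤ s * t := by
      have := one_sub_cos_le_abs (s * t)
      rwa [abs_of_nonneg (by positivity)] at this
    have h2 : (t * Real.log t ^ 2)⁻¹ ≤ (t * (ℓ / 2) ^ 2)⁻¹ := by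
      apply inv_anti₀ (by positivity)
      have : (ℓ / 2) ^ 2 ≤ Real.log t ^ 2 := by nlinarith
      nlinarith
    calc (1 - Real.cos (s * t)) * (t * Real.log t ^ 2)⁻¹
        ≤ (s * t) * (t * (ℓ / 2) ^ 2)⁻¹ := by
          apply mul_le_mul h1 h2 _ (by positivity)
          have ht1 : 1 < t := lt_of_le_of_lt (le_of_lt hE1) (lt_of_lt_of_le hEm htm.le) 
          exact c1_nonneg ht1
      _ = s * (4 / ℓ ^ 2) := by field_simp; ring
  -- integrate the bounds
  have hA1 : ∫ t in Ioc E m, (1 - Real.cos (s * t)) * (t * Real.log t ^ 2)⁻¹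
      ≤ (m - E) * (s ^ 2 * m / 2) := by
    have h := setIntegral_mono_on hint1
      (integrableOn_const measure_Ioc_lt_top.ne) measurableSet_Ioc hbd1
    rwa [setIntegral_const, Real.volume_real_Ioc_of_le (by linarith), smul_eq_mul] at h
  have hA2 : ∫ t in Ioc m b, (1 - Real.cos (s * t)) * (t * Real.log t ^ 2)⁻¹
      ≤ (b - m) * (s * (4 / ℓ ^ 2)) := by
    have h := setIntegral_mono_on hint2
      (integrableOn_const measure_Ioc_lt_top.ne) measurableSet_Ioc hbd2
    rwa [setIntegral_const, Real.volume_real_Ioc_of_le (by linarith), smul_eq_mul] at h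
  have hA1' : (m - E) * (s ^ 2 * m / 2) ≤ s / 2 := by
    have hsb : s * b = 1 := by rw [hbdef]; field_simp
    have hmm : m * m = b := by rw [← hm_sq]; ring
    have h1 : (m - E) * (s ^ 2 * m / 2) ≤ m * (s ^ 2 * m / 2) :=
      mul_le_mul_of_nonneg_right (by linarith) (by positivity)
    have h2 : m * (s ^ 2 * m / 2) = s * (s * b) / 2 := by rw [← hmm]; ring
    rw [h2, hsb] at h1
    linarith
  have hA2' : (b - m) * (s * (4 / ℓ ^ 2)) ≤ 4 / ℓ ^ 2 := by
    have hsb : s * b = 1 := by rw [hbdef]; field_simp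
    have h1 : (b - m) * (s * (4 / ℓ ^ 2)) ≤ b * (s * (4 / ℓ ^ 2)) :=
      mul_le_mul_of_nonneg_right (by linarith) (by positivity)
    have h2 : b * (s * (4 / ℓ ^ 2)) = (s * b) * (4 / ℓ ^ 2) := by ring
    rw [h2, hsb, one_mul] at h1
    exact h1
  have htotal_nonneg : 0 ≤ ∫ t in Ioc E b, (1 - Real.cos (s * t)) * (t * Real.log t ^ 2)⁻¹ :=
    setIntegral_nonneg measurableSet_Ioc hnonneg
  rw [abs_of_nonneg htotal_nonneg, hsplit]
  have := hA1.trans hA1'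
  have := hA2.trans hA2'
  linarith

end AsympF
namespace AsympF

set_option maxHeartbeats 1000000 in
lemma split_identity {s : ℝ} (hs : 0 < s) (hs2 : s < Real.exp (-2 : ℝ)) :
    Real.log s⁻¹ * (Real.cos (s * Real.exp 1)
        - ∫ t in Ioi (Real.exp 1), Real.cos (s * t) * (t * Real.log t ^ 2)⁻¹) - 1
      = Real.log s⁻¹ * (Real.cos (s * Real.exp 1) - 1)
        + Real.log s⁻¹ * (∫ t in Ioc (Real.exp 1) s⁻¹,
            (1 - Real.cos (s * t)) * (t * Real.log t ^ 2)⁻¹)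
        - Real.log s⁻¹ * (∫ t in Ioi s⁻¹, Real.cos (s * t) * (t * Real.log t ^ 2)⁻¹) := by
  have hE1 : (1:ℝ) < Real.exp 1 := by have := Real.add_one_le_exp (1:ℝ); linarith
  set E := Real.exp 1 with hEdef
  set b := s⁻¹ with hbdef
  have hb_large : Real.exp 2 < b := by
    rw [hbdef, show Real.exp 2 = (Real.exp (-2 : ℝ))⁻¹ by rw [← Real.exp_neg]; norm_num]
    exact inv_strictAnti₀ hs hs2
  have hEb : E < b := by
    have : E < Real.exp 2 := Real.exp_lt_exp.mpr (by norm_num)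
    linarith
  have hb1 : 1 < b := lt_trans hE1 hEb
  have hℓ2 : 2 < Real.log b := by
    have := Real.log_lt_log (Real.exp_pos 2) hb_large
    simpa [Real.log_exp] using this
  set ℓ := Real.log b with hℓdef
  -- integrabilities
  have hc1_Ioi : IntegrableOn (fun t : ℝ => (t * Real.log t ^ 2)⁻¹) (Ioi E) :=
    c1_integrableOn hE1
  have hc1_Ioc : IntegrableOn (fun t : ℝ => (t * Real.log t ^ 2)⁻¹) (Ioc E b) :=
    hc1_Ioi.mono Ioc_subset_Ioi_self le_rfl
  have hc1_Ioib : IntegrableOn (fun t : ℝ => (t * Real.log t ^ 2)⁻¹) (Ioi b) :=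
    c1_integrableOn hb1
  have hcos_Ioi : IntegrableOn (fun t : ℝ => Real.cos (s * t) * (t * Real.log t ^ 2)⁻¹)
      (Ioi E) := cos_c1_integrableOn hE1
  have hcos_Ioc : IntegrableOn (fun t : ℝ => Real.cos (s * t) * (t * Real.log t ^ 2)⁻¹)
      (Ioc E b) := hcos_Ioi.mono Ioc_subset_Ioi_self le_rfl
  have hcos_Ioib : IntegrableOn (fun t : ℝ => Real.cos (s * t) * (t * Real.log t ^ 2)⁻¹)
      (Ioi b) := cos_c1_integrableOn hb1
  -- split identities
  have hu : Ioi E = Ioc E b ∪ Ioi b := (Ioc_union_Ioi_eq_Ioi hEb.le).symm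
  have hd : Disjoint (Ioc E b) (Ioi b) := Ioc_disjoint_Ioi le_rfl
  have hsplit1 : ∫ t in Ioi E, (t * Real.log t ^ 2)⁻¹
      = (∫ t in Ioc E b, (t * Real.log t ^ 2)⁻¹) + ∫ t in Ioi b, (t * Real.log t ^ 2)⁻¹ := by
    rw [hu]; exact setIntegral_union hd measurableSet_Ioi hc1_Ioc hc1_Ioib
  have hsplit2 : ∫ t in Ioi E, Real.cos (s * t) * (t * Real.log t ^ 2)⁻¹
      = (∫ t in Ioc E b, Real.cos (s * t) * (t * Real.log t ^ 2)⁻¹)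
        + ∫ t in Ioi b, Real.cos (s * t) * (t * Real.log t ^ 2)⁻¹ := by
    rw [hu]; exact setIntegral_union hd measurableSet_Ioi hcos_Ioc hcos_Ioib
  have hone : ∫ t in Ioi E, (t * Real.log t ^ 2)⁻¹ = 1 := by
    rw [c1_integral hE1, hEdef, Real.log_exp, inv_one]
  have hIoib : ∫ t in Ioi b, (t * Real.log t ^ 2)⁻¹ = ℓ⁻¹ := by
    rw [c1_integral hb1]
  have hA : ∫ t in Ioc E b, (1 - Real.cos (s * t)) * (t * Real.log t ^ 2)⁻¹
      = (∫ t in Ioc E b, (t * Real.log t ^ 2)⁻¹)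
        - ∫ t in Ioc E b, Real.cos (s * t) * (t * Real.log t ^ 2)⁻¹ := by
    rw [← integral_sub hc1_Ioc hcos_Ioc]
    congr 1
    funext t
    ring
  have hℓinv : ℓ * ℓ⁻¹ = 1 := mul_inv_cancel₀ (by linarith)
  rw [hsplit2, hA]
  have h1 : (∫ t in Ioc E b, (t * Real.log t ^ 2)⁻¹) = 1 - ℓ⁻¹ := by
    rw [← hone, hsplit1, hIoib]; ring
  rw [h1]
  ring_nf
  nlinarith [hℓinv]

lemma main_tendsto :
    Tendsto (fun s : ℝ => Real.log s⁻¹ * (Real.cos (s * Real.exp 1)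
        - ∫ t in Ioi (Real.exp 1), Real.cos (s * t) * (t * Real.log t ^ 2)⁻¹))
      (nhdsWithin 0 (Ioi 0)) (nhds 1) := by
  rw [← tendsto_sub_nhds_zero_iff]
  apply squeeze_zero_norm' (a := fun s : ℝ =>
    Real.log s⁻¹ * (5 * s ^ 2) + Real.log s⁻¹ * s + 8 / Real.log s⁻¹)
  · filter_upwards [Ioo_mem_nhdsGT_of_mem
      (Set.left_mem_Ico.mpr (Real.exp_pos (-2 : ℝ)))] with s hs
    obtain ⟨hs0, hs2⟩ := hs
    have hE1 : (1:ℝ) < Real.exp 1 := by have := Real.add_one_le_exp (1:ℝ); linarith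
    have hb_large : Real.exp 2 < s⁻¹ := by
      rw [show Real.exp 2 = (Real.exp (-2 : ℝ))⁻¹ by rw [← Real.exp_neg]; norm_num]
      exact inv_strictAnti₀ hs0 hs2
    have hbE : Real.exp 1 ≤ s⁻¹ := by
      have : Real.exp 1 < Real.exp 2 := Real.exp_lt_exp.mpr (by norm_num)
      linarith
    have hℓ2 : 2 < Real.log s⁻¹ := by
      have := Real.log_lt_log (Real.exp_pos 2) hb_large
      simpa [Real.log_exp] using this
    set ℓ := Real.log s⁻¹ with hℓdef
    have hsb : s * s⁻¹ = 1 := mul_inv_cancel₀ (ne_of_gt hs0)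
    -- the three bounds
    have hcos : |Real.cos (s * Real.exp 1) - 1| ≤ 5 * s ^ 2 := by
      have h1 : 1 - Real.cos (s * Real.exp 1) ≤ (s * Real.exp 1) ^ 2 / 2 :=
        one_sub_cos_le_sq_div_two _
      have h2 : Real.cos (s * Real.exp 1) ≤ 1 := Real.cos_le_one _
      have hE3 : Real.exp 1 < 3 := by
        have := Real.exp_one_lt_d9; linarith
      have h3 : (s * Real.exp 1) ^ 2 ≤ 9 * s ^ 2 := by
        rw [mul_pow]
        have he9 : Real.exp 1 ^ 2 ≤ 9 := by nlinarith [Real.exp_pos 1]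
        nlinarith [sq_nonneg s]
      rw [abs_sub_comm, abs_of_nonneg (by linarith)]
      linarith
    have hAb := A_bound hs0 hs2
    have hHb := H_bound hs0 hbE hsb
    have hid := split_identity hs0 hs2
    rw [Real.norm_eq_abs, hid]
    have hℓpos : 0 < ℓ := by linarith
    calc |ℓ * (Real.cos (s * Real.exp 1) - 1)
          + ℓ * (∫ t in Ioc (Real.exp 1) s⁻¹, (1 - Real.cos (s * t)) * (t * Real.log t ^ 2)⁻¹)
          - ℓ * (∫ t in Ioi s⁻¹, Real.cos (s * t) * (t * Real.log t ^ 2)⁻¹)|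
        ≤ |ℓ * (Real.cos (s * Real.exp 1) - 1)|
          + |ℓ * (∫ t in Ioc (Real.exp 1) s⁻¹, (1 - Real.cos (s * t)) * (t * Real.log t ^ 2)⁻¹)|
          + |ℓ * (∫ t in Ioi s⁻¹, Real.cos (s * t) * (t * Real.log t ^ 2)⁻¹)| := by
          exact (abs_sub _ _).trans (by gcongr; exact abs_add_le _ _)
      _ ≤ ℓ * (5 * s ^ 2) + ℓ * (s / 2 + 4 / ℓ ^ 2) + ℓ * (4 / ℓ ^ 2) := by
          rw [abs_mul, abs_mul, abs_mul, abs_of_pos hℓpos]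
          gcongr
      _ ≤ ℓ * (5 * s ^ 2) + ℓ * s + 8 / ℓ := by
          have e1 : ℓ * (4 / ℓ ^ 2) = 4 / ℓ := by field_simp
          have e2 : ℓ * (s / 2 + 4 / ℓ ^ 2) = ℓ * s / 2 + 4 / ℓ := by field_simp
          rw [e1, e2]
          have h4 : 0 ≤ ℓ * s := by positivity
          have e3 : 4 / ℓ + 4 / ℓ = 8 / ℓ := by ring
          linarith
  · -- the bound tends to zero
    have t_log : Tendsto (fun s : ℝ => Real.log s⁻¹) (nhdsWithin 0 (Ioi 0)) atTop := by
      have h := Real.tendsto_log_nhdsGT_zero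
      have h2 : Tendsto (fun s : ℝ => -Real.log s) (nhdsWithin 0 (Ioi 0)) atTop :=
        tendsto_neg_atBot_atTop.comp h
      apply h2.congr
      intro s
      rw [Real.log_inv]
    have t1 : Tendsto (fun s : ℝ => Real.log s⁻¹ * (5 * s ^ 2))
        (nhdsWithin 0 (Ioi 0)) (nhds 0) := by
      have h := (tendsto_log_mul_rpow_nhdsGT_zero (by norm_num : (0:ℝ) < 2)).const_mul (-5 : ℝ)
      rw [mul_zero] at h
      apply h.congr'
      filter_upwards [self_mem_nhdsWithin] with s hs
      have hs0 : (0:ℝ) < s := hs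
      rw [Real.log_inv, Real.rpow_two]
      ring
    have t2 : Tendsto (fun s : ℝ => Real.log s⁻¹ * s) (nhdsWithin 0 (Ioi 0)) (nhds 0) := by
      have h := (tendsto_log_mul_rpow_nhdsGT_zero (by norm_num : (0:ℝ) < 1)).const_mul (-1 : ℝ)
      rw [mul_zero] at h
      apply h.congr'
      filter_upwards [self_mem_nhdsWithin] with s hs
      have hs0 : (0:ℝ) < s := hs
      rw [Real.log_inv, Real.rpow_one]
      ring
    have t3 : Tendsto (fun s : ℝ => 8 / Real.log s⁻¹) (nhdsWithin 0 (Ioi 0)) (nhds 0) := by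
      have h := t_log.inv_tendsto_atTop.const_mul (8:ℝ)
      rw [mul_zero] at h
      apply h.congr
      intro s
      simp [div_eq_mul_inv]
    have := (t1.add t2).add t3
    simpa using this

end AsympF

/-- For `s > 0` the improper integral `F(s) = lim_{R→∞} ∫_e^R sin(st)/log(t) dt` exists,
and `s·log(1/s)·F(s) → 1` as `s → 0⁺`; in particular `F(s) ~ 1/(s·log(1/s))` as `s → 0⁺`. -/
theorem asymptotics_F_at_zero :
    (∀ s : ℝ, 0 < s → ∃ L : ℝ, Filter.Tendsto
      (fun R : ℝ => ∫ t in (Real.exp 1)..R, Real.sin (s * t) / Real.log t)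
      Filter.atTop (nhds L)) ∧
    ∀ F : ℝ → ℝ,
      (∀ s : ℝ, 0 < s → Filter.Tendsto
        (fun R : ℝ => ∫ t in (Real.exp 1)..R, Real.sin (s * t) / Real.log t)
        Filter.atTop (nhds (F s))) →
      Filter.Tendsto (fun s : ℝ => s * Real.log (1 / s) * F s)
        (nhdsWithin 0 (Set.Ioi 0)) (nhds 1) := by
  constructor
  · intro s hs
    exact ⟨_, AsympF.part1 hs⟩
  · intro F hF
    apply AsympF.main_tendsto.congr'
    filter_upwards [self_mem_nhdsWithin] with s hs
    have hs0 : (0:ℝ) < s := hs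
    have hFs : F s = s⁻¹ * (Real.cos (s * Real.exp 1)
        - ∫ t in Set.Ioi (Real.exp 1), Real.cos (s * t) * (t * Real.log t ^ 2)⁻¹) :=
      tendsto_nhds_unique (hF s hs0) (AsympF.part1 hs0)
    rw [hFs, one_div]
    field_simp
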